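/- Let p be an odd prime, σ the permutation x ↦ x+1 and δ the permutation x ↦ x^(p-2) of F_p. If p ≡ 1 (mod 4), then the subgroup of the symmetric group on F_p generated by σ and δ is the full symmetric group. -/

import Mathlib

/-!
The word `w = δ σ⁻¹ δ σ²` acts as `x ↦ ((x + 2)⁻¹ - 1)⁻¹`. Away from `{0, -1, -2}` this is the
Möbius involution `x ↦ -(x + 2)/(x + 1)`, while `0 ↦ -2 ↦ -1 ↦ 0`; hence `w²` is a 3-cycle.
Since `σ` is a `p`-cycle, `⟨σ, δ⟩` is transitive of prime degree, hence primitive, and by Jordan's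
theorem it contains the alternating group. Finally `δ` is an involution whose only fixed points are
`0, ±1`, so it is a product of `(p - 3)/2` transpositions: an odd permutation when `p ≡ 1 (mod 4)`.
-/

open Equiv Equiv.Perm MulAction

theorem FiniteField.pow_card_sub_two_eq_inv {K : Type*} [Field K] [Fintype K]
    (hK : 2 < Fintype.card K) (x : K) : x ^ (Fintype.card K - 2) = x⁻¹ := by
  rcases eq_or_ne x 0 with rfl | hx
  · rw [zero_pow (by omega), inv_zero]
  · refine eq_inv_of_mul_eq_one_left ?_
    rw [← pow_succ, show Fintype.card K - 2 + 1 = Fintype.card K - 1 by omega,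
      FiniteField.pow_card_sub_one_eq_one x hx]

theorem isPretransitive_of_addRight_one_mem {n : ℕ} [NeZero n] {G : Subgroup (Perm (ZMod n))}
    (h : Equiv.addRight 1 ∈ G) : IsPretransitive G (ZMod n) :=
  ⟨fun x y => ⟨⟨Equiv.addRight 1 ^ (y - x).val, pow_mem h _⟩, by
    simp [Subgroup.mk_smul, Perm.smul_def, nsmul_addRight]⟩⟩

theorem Equiv.Perm.eq_top_of_alternatingGroup_le_of_sign_eq_neg_one {α : Type*} [Fintype α]
    [DecidableEq α] {G : Subgroup (Perm α)} (hA : alternatingGroup α ≤ G) {g : Perm α} (hg : g ∈ G)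
    (hsign : sign g = -1) : G = ⊤ := by
  refine eq_top_iff.2 fun f _ => ?_
  rcases Int.units_eq_one_or (sign f) with hf | hf
  · exact hA hf
  · have hfg : f * g ∈ alternatingGroup α := by
      rw [mem_alternatingGroup, map_mul, hf, hsign]; rfl
    simpa using mul_mem (hA hfg) (inv_mem hg)

section Field

variable {F : Type*} [Field F]

theorem card_fixedPoints_equivInv [Fintype F] [DecidableEq F] (h2 : (2 : F) ≠ 0) :
    Fintype.card (Function.fixedPoints (Equiv.inv F)) = 3 := by
  rw [Fintype.card_of_subtype {-1, 0, 1} fun x => by simp [Function.IsFixedPt, inv_eq_self₀]]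
  have : (-1 : F) ≠ 1 := fun h => h2 (by linear_combination -h)
  simp [this]

theorem sign_equivInv [Fintype F] [DecidableEq F] (h2 : (2 : F) ≠ 0) :
    sign (Equiv.inv F) = (-1) ^ ((Fintype.card F - 3) / 2) := by
  rw [sign_of_pow_two_eq_one (Equiv.ext fun x => inv_inv x), card_fixedPoints_equivInv h2]

def cycleWord (F : Type*) [Field F] : Perm F :=
  Equiv.inv F * (Equiv.addRight 1)⁻¹ * Equiv.inv F * Equiv.addRight 1 ^ 2

theorem cycleWord_apply (x : F) : cycleWord F x = ((x + 2)⁻¹ - 1)⁻¹ := by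
  simp [cycleWord, pow_two, sub_eq_add_neg, one_add_one_eq_two]

theorem cycleWord_cycleWord {x : F} (h0 : x ≠ 0) (h1 : x ≠ -1) (h2 : x ≠ -2) :
    cycleWord F (cycleWord F x) = x := by
  have h1' : x + 1 ≠ 0 := fun h => h1 (by linear_combination h)
  have h2' : x + 2 ≠ 0 := fun h => h2 (by linear_combination h)
  have hw : cycleWord F x = -(x + 2) / (x + 1) := by
    rw [cycleWord_apply, show (x + 2)⁻¹ - 1 = -(x + 1) / (x + 2) by field_simp; ring,
      inv_div, div_neg, neg_div]
  have hw2 : cycleWord F x + 2 = x / (x + 1) := by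
    rw [hw]; field_simp; ring
  rw [cycleWord_apply, hw2]
  field_simp
  ring

theorem isThreeCycle_cycleWord_sq [Fintype F] [DecidableEq F] (h2 : (2 : F) ≠ 0) :
    (cycleWord F ^ 2).IsThreeCycle := by
  have hw0 : cycleWord F 0 = -2 := by
    rw [cycleWord_apply, zero_add, show (2 : F)⁻¹ - 1 = -2⁻¹ by field_simp; ring, inv_neg,
      inv_inv]
  have hwm1 : cycleWord F (-1) = 0 := by norm_num [cycleWord_apply]
  have hwm2 : cycleWord F (-2) = -1 := by norm_num [cycleWord_apply]
  rw [← card_support_eq_three_iff,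
    show (cycleWord F ^ 2).support = {0, -1, -2} from ?_]
  · have : (-1 : F) ≠ -2 := fun h => one_ne_zero (by linear_combination h)
    simp [h2, this]
  ext x
  simp only [mem_support, pow_two, Perm.mul_apply, Finset.mem_insert, Finset.mem_singleton]
  constructor
  · contrapose!
    rintro ⟨hx0, hx1, hx2⟩
    exact cycleWord_cycleWord hx0 hx1 hx2
  · rintro (rfl | rfl | rfl)
    · rw [hw0, hwm2]; exact neg_ne_zero.2 one_ne_zero
    · rw [hwm1, hw0]; exact fun h => one_ne_zero (by linear_combination -h)
    · rw [hwm2, hwm1]; exact (neg_ne_zero.2 h2).symm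

end Field

theorem stmt_12 (p : ℕ) (hp : p.Prime) (hp4 : p % 4 = 1)
    (σ δ : Equiv.Perm (ZMod p)) (hσ : ∀ x, σ x = x + 1)
    (hδ : ∀ x, δ x = x ^ (p - 2)) :
    Subgroup.closure {σ, δ} = (⊤ : Subgroup (Equiv.Perm (ZMod p))) := by
  have : Fact p.Prime := ⟨hp⟩
  have hp5 : 5 ≤ p := by have := hp.two_le; omega
  have h2 : (2 : ZMod p) ≠ 0 := fun h => by
    have := Nat.le_of_dvd two_pos ((ZMod.natCast_eq_zero_iff 2 p).1 (mod_cast h))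
    omega
  have hinv : ∀ x : ZMod p, x ^ (p - 2) = x⁻¹ := by
    simpa [ZMod.card] using FiniteField.pow_card_sub_two_eq_inv (K := ZMod p) (by simp; omega)
  obtain rfl : σ = Equiv.addRight 1 := Equiv.ext hσ
  obtain rfl : δ = Equiv.inv (ZMod p) := Equiv.ext fun x => (hδ x).trans (hinv x)
  set G := Subgroup.closure {Equiv.addRight (1 : ZMod p), Equiv.inv (ZMod p)}
  have hσG : Equiv.addRight 1 ∈ G := Subgroup.subset_closure (by simp)
  have hδG : Equiv.inv (ZMod p) ∈ G := Subgroup.subset_closure (by simp)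
  have := isPretransitive_of_addRight_one_mem hσG
  have hG : IsPreprimitive G (ZMod p) := .of_prime_card (by rwa [Nat.card_zmod])
  have hA := alternatingGroup_le_of_isPreprimitive_of_isThreeCycle_mem hG
    (isThreeCycle_cycleWord_sq h2)
    (pow_mem (mul_mem (mul_mem (mul_mem hδG (inv_mem hσG)) hδG) (pow_mem hσG 2)) 2)
  refine eq_top_of_alternatingGroup_le_of_sign_eq_neg_one hA hδG ?_
  rw [sign_equivInv h2, ZMod.card]
  exact Odd.neg_one_pow ⟨(p - 5) / 4, by omega⟩
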